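/- A graph G is a big-μ graph (i.e., G = (K_1 ∪ K_t) + H for some t ≥ 0 and graph H) if and only if there exists a vertex v of G adjacent to every vertex u of G − v satisfying deg_{G−v}(u) < n(G) − 2. -/

import Mathlib

namespace MutualVisibility

open SimpleGraph

variable {V W : Type*}

/-- `x` and `y` are `X`-visible in `G`: there is a shortest `x,y`-path all of whose
internal vertices avoid `X`. -/
def Visible (G : SimpleGraph V) (X : Set V) (x y : V) : Prop :=
  ∃ p : G.Walk x y, p.length = G.dist x y ∧ ∀ v ∈ p.support, v ≠ x → v ≠ y → v ∉ X

/-- `X` is a mutual-visibility set: any two vertices of `X` are `X`-visible. -/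
def IsMutualVisSet (G : SimpleGraph V) (X : Set V) : Prop :=
  ∀ x ∈ X, ∀ y ∈ X, Visible G X x y

/-- outer mutual-visibility set -/
def IsOuterMutualVisSet (G : SimpleGraph V) (X : Set V) : Prop :=
  IsMutualVisSet G X ∧ ∀ x ∈ X, ∀ y ∉ X, Visible G X x y

/-- dual mutual-visibility set -/
def IsDualMutualVisSet (G : SimpleGraph V) (X : Set V) : Prop :=
  IsMutualVisSet G X ∧ ∀ x ∉ X, ∀ y ∉ X, Visible G X x y

/-- total mutual-visibility set -/
def IsTotalMutualVisSet (G : SimpleGraph V) (X : Set V) : Prop :=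
  ∀ x y : V, Visible G X x y

/-- mutual-visibility number μ(G) -/
noncomputable def mu (G : SimpleGraph V) : ℕ :=
  sSup {k | ∃ X : Set V, IsMutualVisSet G X ∧ X.ncard = k}

/-- outer mutual-visibility number μ_o(G) -/
noncomputable def muOuter (G : SimpleGraph V) : ℕ :=
  sSup {k | ∃ X : Set V, IsOuterMutualVisSet G X ∧ X.ncard = k}

/-- dual mutual-visibility number μ_d(G) -/
noncomputable def muDual (G : SimpleGraph V) : ℕ :=
  sSup {k | ∃ X : Set V, IsDualMutualVisSet G X ∧ X.ncard = k}

/-- total mutual-visibility number μ_t(G) -/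
noncomputable def muTotal (G : SimpleGraph V) : ℕ :=
  sSup {k | ∃ X : Set V, IsTotalMutualVisSet G X ∧ X.ncard = k}

/-- `H` contains a subgraph copy of `F`. -/
def ContainsCopy (F : SimpleGraph W) (H : SimpleGraph V) : Prop :=
  ∃ f : W → V, Function.Injective f ∧ ∀ a b, F.Adj a b → H.Adj (f a) (f b)

/-- The Turán number ex(n; F): max number of edges of an `n`-vertex graph with no copy of `F`. -/
noncomputable def exNum (n : ℕ) (F : SimpleGraph W) : ℕ :=
  sSup {k | ∃ H : SimpleGraph (Fin n), ¬ ContainsCopy F H ∧ H.edgeSet.ncard = k}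

/-- The direct (tensor/categorical) product of graphs. -/
def directProd (G : SimpleGraph V) (H : SimpleGraph W) : SimpleGraph (V × W) where
  Adj x y := G.Adj x.1 y.1 ∧ H.Adj x.2 y.2
  symm := ⟨fun _ _ h => ⟨h.1.symm, h.2.symm⟩⟩
  loopless := ⟨fun x h => G.irrefl h.1⟩

/-- The join `G + H` of two graphs. -/
def graphJoin (G : SimpleGraph V) (H : SimpleGraph W) : SimpleGraph (V ⊕ W) where
  Adj u v := match u, v with
    | Sum.inl a, Sum.inl b => G.Adj a b
    | Sum.inr a, Sum.inr b => H.Adj a b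
    | _, _ => True
  symm := ⟨fun u v => match u, v with
    | Sum.inl _, Sum.inl _ => fun h => SimpleGraph.Adj.symm h
    | Sum.inr _, Sum.inr _ => fun h => SimpleGraph.Adj.symm h
    | Sum.inl _, Sum.inr _ => fun _ => trivial
    | Sum.inr _, Sum.inl _ => fun _ => trivial⟩
  loopless := ⟨fun u => match u with
    | Sum.inl _ => fun h => G.irrefl h
    | Sum.inr _ => fun h => H.irrefl h⟩

/-- A big-μ graph: `G = (K_1 ∪ K_t) + H` for some `t ≥ 0` and some graph `H`. -/
def IsBigMu {V : Type} (G : SimpleGraph V) : Prop :=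
  ∃ (t : ℕ) (W : Type) (H : SimpleGraph W),
    Nonempty (G ≃g graphJoin ((⊤ : SimpleGraph (Fin 1)) ⊕g (⊤ : SimpleGraph (Fin t))) H)

/-- A cograph: a graph with no induced path on four vertices. -/
def IsCograph (G : SimpleGraph V) : Prop :=
  ¬ ∃ f : Fin 4 → V, Function.Injective f ∧
      ∀ a b, (pathGraph 4).Adj a b ↔ G.Adj (f a) (f b)

/-- The Petersen graph, realized as the Kneser graph K(5,2). -/
def petersen : SimpleGraph {s : Finset (Fin 5) // s.card = 2} where
  Adj a b := Disjoint a.1 b.1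
  symm := ⟨fun _ _ h => h.symm⟩
  loopless := ⟨by
    rintro ⟨s, hs⟩ h
    rw [disjoint_self, Finset.bot_eq_empty] at h
    subst h
    simp at hs⟩

/- Since `u` is never its own neighbour, `deg_{G-v}(u) ≤ n - 2`, with equality exactly when `u` is
adjacent to every vertex other than `u` and `v`. So the condition says that the non-neighbours
`S` of `v` (other than `v`) form a clique joined to all of `N(v)`; then `v ↦ K_1`, `S ↦ K_t`,
`N(v) ↦ H = G[N(v)]` is an isomorphism `G ≅ (K_1 ∪ K_t) + H`. Conversely, in `(K_1 ∪ K_t) + H`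
the vertex of `K_1` has this property, and the property is invariant under isomorphism. -/

section Join

variable {G : SimpleGraph V} {H : SimpleGraph W}

@[simp] lemma graphJoin_adj_inl_inl {a b : V} :
    (graphJoin G H).Adj (.inl a) (.inl b) ↔ G.Adj a b := Iff.rfl

@[simp] lemma graphJoin_adj_inr_inr {a b : W} :
    (graphJoin G H).Adj (.inr a) (.inr b) ↔ H.Adj a b := Iff.rfl

@[simp] lemma graphJoin_adj_inl_inr {a : V} {b : W} : (graphJoin G H).Adj (.inl a) (.inr b) :=
  trivial

@[simp] lemma graphJoin_adj_inr_inl {a : W} {b : V} : (graphJoin G H).Adj (.inr a) (.inl b) :=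
  trivial

def graphJoinCongr {V' W' : Type*} {G' : SimpleGraph V'} {H' : SimpleGraph W'}
    (f : G ≃g G') (g : H ≃g H') : graphJoin G H ≃g graphJoin G' H' where
  toEquiv := Equiv.sumCongr f.toEquiv g.toEquiv
  map_rel_iff' := by
    rintro (a | a) (b | b) <;> simp [f.map_adj_iff, g.map_adj_iff]

end Join

def IsEnabling (G : SimpleGraph V) (v : V) : Prop :=
  ∀ u, u ≠ v → ¬ G.Adj v u → ∀ w, w ≠ u → w ≠ v → G.Adj u w

theorem ncard_neighborSet_sdiff_lt_iff [Fintype V] {G : SimpleGraph V} {u v : V} (huv : u ≠ v) :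
    (G.neighborSet u \ {v}).ncard < Fintype.card V - 2 ↔
      ∃ w, w ≠ u ∧ w ≠ v ∧ ¬ G.Adj u w := by
  have hsub : G.neighborSet u \ {v} ⊆ {u, v}ᶜ := by
    rintro w ⟨huw, hwv⟩ (rfl | rfl)
    exacts [G.irrefl huw, hwv rfl]
  have hcard : ({u, v}ᶜ : Set V).ncard = Fintype.card V - 2 := by
    rw [Set.ncard_compl, Set.ncard_pair huv, Nat.card_eq_fintype_card]
  rw [← hcard, ← tsub_pos_iff_lt, ← Set.ncard_sdiff hsub, Set.ncard_pos]
  refine exists_congr fun w => ?_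
  simp only [Set.mem_sdiff, Set.mem_compl_iff, Set.mem_insert_iff, Set.mem_singleton_iff,
    mem_neighborSet]
  tauto

theorem isEnabling_iff_ncard [Fintype V] {G : SimpleGraph V} {v : V} :
    IsEnabling G v ↔ ∀ u, u ≠ v →
      (G.neighborSet u \ {v}).ncard < Fintype.card V - 2 → G.Adj v u := by
  refine forall₂_congr fun u huv => ?_
  rw [ncard_neighborSet_sdiff_lt_iff huv, not_imp_comm]
  push Not
  rfl

theorem IsEnabling.of_iso {V' : Type*} {G : SimpleGraph V} {G' : SimpleGraph V'} (e : G ≃g G')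
    {v : V} (h : IsEnabling G' (e v)) : IsEnabling G v := by
  intro u huv hvu w hwu hwv
  exact e.map_adj_iff.mp <| h (e u) (e.injective.ne huv) (e.map_adj_iff.not.mpr hvu) (e w)
    (e.injective.ne hwu) (e.injective.ne hwv)

theorem isEnabling_graphJoin (S : Type*) (H : SimpleGraph W) :
    IsEnabling (graphJoin ((⊤ : SimpleGraph (Fin 1)) ⊕g (⊤ : SimpleGraph S)) H)
      (.inl (.inl 0)) := by
  rintro ((a | s) | x) huv hvu w hwu hwv
  · exact absurd (by rw [Subsingleton.elim a 0]) huv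
  · rcases w with ((b | s') | y)
    · exact absurd (by rw [Subsingleton.elim b 0]) hwv
    · simpa [eq_comm] using hwu
    · trivial
  · exact absurd trivial hvu

section Split

variable (G : SimpleGraph V) (v : V)

noncomputable def vertexSplitEquiv :
    (Fin 1 ⊕ {u // u ≠ v ∧ ¬ G.Adj v u}) ⊕ G.neighborSet v ≃ V := by
  refine Equiv.ofBijective (Sum.elim (Sum.elim (fun _ => v) Subtype.val) Subtype.val)
    ⟨.sumElim (.sumElim (fun a b _ => Subsingleton.elim a b) Subtype.val_injective
      fun _ s => s.2.1.symm) Subtype.val_injective ?_, fun u => ?_⟩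
  · rintro (_ | s) ⟨x, hx⟩ rfl
    exacts [G.irrefl hx, s.2.2 hx]
  · by_cases huv : u = v
    · exact ⟨.inl (.inl 0), huv.symm⟩
    by_cases hvu : G.Adj v u
    exacts [⟨.inr ⟨u, hvu⟩, rfl⟩, ⟨.inl (.inr ⟨u, huv, hvu⟩), rfl⟩]

@[simp] lemma vertexSplitEquiv_apply (x) :
    vertexSplitEquiv G v x = Sum.elim (Sum.elim (fun _ => v) Subtype.val) Subtype.val x :=
  rfl

variable {G v}

noncomputable def IsEnabling.isoGraphJoin (h : IsEnabling G v) :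
    graphJoin ((⊤ : SimpleGraph (Fin 1)) ⊕g (⊤ : SimpleGraph {u // u ≠ v ∧ ¬ G.Adj v u}))
      (G.induce (G.neighborSet v)) ≃g G where
  toEquiv := vertexSplitEquiv G v
  map_rel_iff' := by
    rintro ((a | ⟨s, hsv, hvs⟩) | ⟨x, hvx⟩) ((b | ⟨s', hsv', hvs'⟩) | ⟨y, hvy⟩) <;>
      simp only [ne_eq, vertexSplitEquiv_apply, Sum.elim_inl, Sum.elim_inr, SimpleGraph.irrefl,
        completeGraph_eq_top, graphJoin_adj_inl_inl, graphJoin_adj_inl_inr, graphJoin_adj_inr_inl,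
        graphJoin_adj_inr_inr, sum_adj, top_adj, false_iff, iff_false, iff_true, not_not,
        Subtype.mk.injEq, comap_adj, Function.Embedding.subtype_apply]
    · exact Subsingleton.elim a b
    · exact hvs'
    · exact hvy
    · exact fun hsv => hvs hsv.symm
    · exact ⟨G.ne_of_adj, fun hss' => h s hsv hvs s' (Ne.symm hss') hsv'⟩
    · exact h s hsv hvs y (by rintro rfl; exact hvs hvy) (G.ne_of_adj hvy).symm
    · exact hvx.symm
    · exact (h s' hsv' hvs' x (by rintro rfl; exact hvs' hvx) (G.ne_of_adj hvx).symm).symm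

end Split

theorem IsEnabling.isBigMu {V : Type} [Finite V] {G : SimpleGraph V} {v : V} (h : IsEnabling G v) :
    IsBigMu G :=
  ⟨_, _, _, ⟨(graphJoinCongr ((Iso.refl).sumCongr (Iso.completeGraph (Finite.equivFin _)))
    Iso.refl).comp h.isoGraphJoin.symm⟩⟩

theorem bigMu_iff_exists_enabling {V : Type} [Fintype V] (G : SimpleGraph V) :
    IsBigMu G ↔ ∃ v : V, ∀ u : V, u ≠ v →
      ((G.neighborSet u) \ {v}).ncard < Fintype.card V - 2 → G.Adj v u := by
  simp only [← isEnabling_iff_ncard]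
  refine ⟨fun ⟨t, W, H, ⟨e⟩⟩ => ⟨e.symm (.inl (.inl 0)), .of_iso e ?_⟩, fun ⟨v, hv⟩ => hv.isBigMu⟩
  rw [e.apply_symm_apply]
  exact isEnabling_graphJoin (Fin t) H
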